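/- Let Φ_N = {φ_j}_{j=1}^N ⊂ C(Ω) satisfy sup_{x∈Ω}|φ_j(x)| ≤ 1 for all j, fix r ≥ 0, and let F ⊂ C(Ω). Then for every m ∈ ℕ, every ξ ∈ Ω^m, and every integer v ≥ 1, sup_{f∈F} σ_{2v}(f, Φ_N)_{L₂(Ω,μ_ξ)} ≤ v^{−r−1/2} + dist(F, A₁^r(Φ_N))_∞, where dist(F, A₁^r(Φ_N))_∞ := sup_{f∈F} inf_{g∈A₁^r(Φ_N)} ‖f − g‖_∞. -/

import Mathlib

open MeasureTheory

noncomputable section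

/-- The `L_2(Ω,μ)` norm `(∫_Ω |f|² dμ)^{1/2}` of a complex-valued function. -/
def l2n {Ω : Type*} [MeasurableSpace Ω] (μ : Measure Ω) (f : Ω → ℂ) : ℝ :=
  (∫ x, ‖f x‖ ^ 2 ∂μ) ^ (1 / 2 : ℝ)

/-- `Σ_v(D_N)`: the set of all `v`-term approximants with respect to the
dictionary `D_N = {g 0, …, g (N-1)}`. -/
def SparseSet {Ω : Type*} [TopologicalSpace Ω] {N : ℕ} (g : Fin N → C(Ω, ℂ)) (v : ℕ) :
    Set C(Ω, ℂ) :=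
  {h | ∃ J : Finset (Fin N), J.card = v ∧ h ∈ Submodule.span ℂ (g '' ↑J)}

/-- The probability measure `μ_ξ = (1/2)μ + (1/(2m)) ∑_j δ_{ξ^j}`. -/
def discMeasure {Ω : Type*} [MeasurableSpace Ω] (μ : Measure Ω) {m : ℕ} (ξ : Fin m → Ω) :
    Measure Ω :=
  (1 / 2 : ENNReal) • μ + (2 * (m : ENNReal))⁻¹ • ∑ j, Measure.dirac (ξ j)

/-- `u` is a least squares approximant of `f` from the subspace `L` for the points `ξ`:
it minimizes `(1/m) ∑_j ‖f(ξ^j) - u(ξ^j)‖²` over `L`. -/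
def IsLSMin {Ω : Type*} [TopologicalSpace Ω] {m : ℕ} (ξ : Fin m → Ω) (f : Ω → ℂ)
    (L : Submodule ℂ C(Ω, ℂ)) (u : C(Ω, ℂ)) : Prop :=
  u ∈ L ∧ ∀ u' ∈ L,
    (1 / (m : ℝ)) * ∑ j, ‖f (ξ j) - u (ξ j)‖ ^ 2 ≤
      (1 / (m : ℝ)) * ∑ j, ‖f (ξ j) - u' (ξ j)‖ ^ 2

/-- The points `ξ` provide one-sided universal discretization with constant `C₁`
for all functions in `S`: `C₁‖f‖₂² ≤ (1/m) ∑_j |f(ξ^j)|²`. -/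
def OneSidedUD {Ω : Type*} [TopologicalSpace Ω] [MeasurableSpace Ω] (μ : Measure Ω)
    {m : ℕ} (ξ : Fin m → Ω) (C₁ : ℝ) (S : Set C(Ω, ℂ)) : Prop :=
  ∀ f ∈ S, C₁ * (l2n μ ⇑f) ^ 2 ≤ (1 / (m : ℝ)) * ∑ j, ‖f (ξ j)‖ ^ 2

/-- The class `A₁^r(Φ_N) = { ∑_j c_j φ_j : ∑_j |c_j| j^r ≤ 1 }` (indices `j = 1,…,N`). -/
def A1r {Ω : Type*} [TopologicalSpace Ω] {N : ℕ} (φ : Fin N → C(Ω, ℂ)) (r : ℝ) :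
    Set C(Ω, ℂ) :=
  {h | ∃ c : Fin N → ℂ, h = ∑ j, c j • φ j ∧ ∑ j, ‖c j‖ * ((j : ℕ) + 1 : ℝ) ^ r ≤ 1}

/-! Split `g = ∑ cⱼ φⱼ ∈ A₁^r(Φ_N)` into its first `v` terms and a tail, whose `ℓ¹` norm is at
most `v^{-r}` because of the weights `j^r`. In a Hilbert space in which all `‖φⱼ‖ ≤ 1`, Maurey's
lemma approximates the tail by `v` dictionary terms to within `v^{-r}/√v`; so `g` has a `2v`-term
approximant within `v^{-r-1/2}`. Since `μ_ξ` has mass at most one, `L₂(μ_ξ)` is such a space and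
its norm is dominated by the sup norm, which handles `f - g`. -/

open Finset Submodule
open scoped InnerProductSpace

section Maurey

variable {𝕜 E ι : Type*} [RCLike 𝕜] [NormedAddCommGroup E] [InnerProductSpace 𝕜 E] [Fintype ι]

theorem exists_le_sum_mul_of_sum_eq_one (p X : ι → ℝ) (hp₀ : ∀ i, 0 ≤ p i)
    (hp₁ : ∑ i, p i = 1) : ∃ i, X i ≤ ∑ j, p j * X j := by
  obtain ⟨i, -, hi⟩ := (concaveOn_id convex_univ).exists_le_of_centerMass (t := univ) (p := X)
    (fun i _ => hp₀ i) (by rw [hp₁]; exact one_pos) (fun i _ => Set.mem_univ (X i))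
  exact ⟨i, by simpa [centerMass_eq_of_sum_1 _ _ hp₁] using hi⟩

theorem sum_mul_norm_add_sq_of_sum_smul_eq_zero (p : ι → ℝ) (hp₁ : ∑ i, p i = 1)
    (z : ι → E) (hz : ∑ i, (p i : 𝕜) • z i = 0) (u : E) :
    ∑ i, p i * ‖u + z i‖ ^ 2 = ‖u‖ ^ 2 + ∑ i, p i * ‖z i‖ ^ 2 := by
  have hcross : ∑ i, p i * RCLike.re ⟪u, z i⟫_𝕜 = 0 := by
    calc ∑ i, p i * RCLike.re ⟪u, z i⟫_𝕜 = RCLike.re ⟪u, ∑ i, (p i : 𝕜) • z i⟫_𝕜 := by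
          simp [inner_sum, inner_smul_right]
      _ = 0 := by rw [hz, inner_zero_right, map_zero]
  calc ∑ i, p i * ‖u + z i‖ ^ 2
      = ∑ i, (p i * ‖u‖ ^ 2 + 2 * (p i * RCLike.re ⟪u, z i⟫_𝕜) + p i * ‖z i‖ ^ 2) :=
        sum_congr rfl fun i _ => by rw [@norm_add_sq 𝕜]; ring
    _ = ‖u‖ ^ 2 + ∑ i, p i * ‖z i‖ ^ 2 := by
        rw [sum_add_distrib, sum_add_distrib, ← sum_mul, ← mul_sum, hp₁, hcross]; ring

variable {p : ι → ℝ} {w : ι → E} {A : ℝ}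

theorem sum_smul_sub_eq_zero (hp₁ : ∑ i, p i = 1) :
    ∑ i, (p i : 𝕜) • (∑ j, (p j : 𝕜) • w j - w i) = 0 := by
  simp [smul_sub, sum_sub_distrib, ← sum_smul, ← RCLike.ofReal_sum, hp₁]

theorem sum_mul_norm_sub_sq_le (hp₀ : ∀ i, 0 ≤ p i) (hp₁ : ∑ i, p i = 1)
    (hw : ∀ i, ‖w i‖ ≤ A) :
    ∑ i, p i * ‖∑ j, (p j : 𝕜) • w j - w i‖ ^ 2 ≤ A ^ 2 := by
  have hvar := sum_mul_norm_add_sq_of_sum_smul_eq_zero (𝕜 := 𝕜) p hp₁ _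
    (sum_smul_sub_eq_zero (w := w) hp₁) (-∑ j, (p j : 𝕜) • w j)
  simp only [neg_add_eq_sub, sub_sub_cancel_left, norm_neg] at hvar
  calc _ ≤ ∑ i, p i * ‖w i‖ ^ 2 := by
        rw [hvar]; nlinarith [sq_nonneg ‖∑ j, (p j : 𝕜) • w j‖]
    _ ≤ ∑ i, p i * A ^ 2 := by
        gcongr with i; exacts [hp₀ i, hw i]
    _ = A ^ 2 := by rw [← sum_mul, hp₁, one_mul]

theorem exists_norm_add_sub_sq_le (hp₀ : ∀ i, 0 ≤ p i) (hp₁ : ∑ i, p i = 1)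
    (hw : ∀ i, ‖w i‖ ≤ A) (S : E) :
    ∃ i, ‖S + (∑ j, (p j : 𝕜) • w j - w i)‖ ^ 2 ≤ ‖S‖ ^ 2 + A ^ 2 := by
  obtain ⟨i, hi⟩ := exists_le_sum_mul_of_sum_eq_one p
    (fun i => ‖S + (∑ j, (p j : 𝕜) • w j - w i)‖ ^ 2) hp₀ hp₁
  refine ⟨i, hi.trans ?_⟩
  rw [sum_mul_norm_add_sq_of_sum_smul_eq_zero (𝕜 := 𝕜) p hp₁ _ (sum_smul_sub_eq_zero hp₁)]
  exact add_le_add le_rfl (sum_mul_norm_sub_sq_le (𝕜 := 𝕜) hp₀ hp₁ hw)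

/-- Maurey's lemma, derandomized: each new point is chosen no worse than the `p`-average, which
by the variance identity adds at most `A²` to the squared norm. -/
theorem exists_norm_sum_sub_sq_le (hp₀ : ∀ i, 0 ≤ p i) (hp₁ : ∑ i, p i = 1)
    (hw : ∀ i, ‖w i‖ ≤ A) (n : ℕ) :
    ∃ σ : Fin n → ι, ‖∑ k, (∑ j, (p j : 𝕜) • w j - w (σ k))‖ ^ 2 ≤ n * A ^ 2 := by
  induction n with
  | zero => exact ⟨Fin.elim0, by simp⟩
  | succ n ih =>
    obtain ⟨σ, hσ⟩ := ih
    obtain ⟨i, hi⟩ := exists_norm_add_sub_sq_le (𝕜 := 𝕜) hp₀ hp₁ hw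
      (∑ k, (∑ j, (p j : 𝕜) • w j - w (σ k)))
    refine ⟨Fin.cons i σ, ?_⟩
    rw [Fin.sum_univ_succ, add_comm]
    simp only [Fin.cons_zero, Fin.cons_succ]
    push_cast
    linarith

theorem exists_mem_span_norm_sum_smul_sub_le (c : ι → 𝕜) (u : ι → E) (hu : ∀ i, ‖u i‖ ≤ 1)
    {n : ℕ} (hn : 0 < n) :
    ∃ J : Finset ι, #J ≤ n ∧ ∃ h ∈ span 𝕜 (u '' J),
      ‖∑ i, c i • u i - h‖ ≤ (∑ i, ‖c i‖) / √n := by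
  classical
  set A := ∑ i, ‖c i‖
  have hA₀ : 0 ≤ A := sum_nonneg fun i _ => norm_nonneg (c i)
  rcases hA₀.eq_or_lt with hA | hA
  · have hc : ∀ i, c i = 0 := fun i =>
      norm_eq_zero.1 ((sum_eq_zero_iff_of_nonneg fun i _ => norm_nonneg (c i)).1 hA.symm i
        (mem_univ i))
    refine ⟨∅, by simp, 0, zero_mem _, ?_⟩
    simp only [hc, zero_smul, sum_const_zero, sub_zero, norm_zero]
    positivity
  -- sample `i` with probability `‖c i‖ / A` and rescale `c i • u i` to have norm at most `A`
  set p : ι → ℝ := fun i => ‖c i‖ / A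
  set w : ι → E := fun i => ((A / ‖c i‖ : ℝ) : 𝕜) • c i • u i
  have hp₀ : ∀ i, 0 ≤ p i := fun i => by positivity
  have hp₁ : ∑ i, p i = 1 := by rw [← sum_div, div_self hA.ne']
  have hw : ∀ i, ‖w i‖ ≤ A := fun i => by
    rcases eq_or_ne (c i) 0 with hci | hci
    · simpa [w, hci] using hA₀
    · calc ‖w i‖ = A * ‖u i‖ := by
            simp only [w, norm_smul, RCLike.norm_ofReal, abs_of_pos hA, abs_div, abs_norm]
            field_simp
        _ ≤ A := mul_le_of_le_one_right hA.le (hu i)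
  have hpw : ∑ i, (p i : 𝕜) • w i = ∑ i, c i • u i := by
    refine sum_congr rfl fun i _ => ?_
    rcases eq_or_ne (c i) 0 with hci | hci
    · simp [w, hci]
    · rw [smul_smul, ← RCLike.ofReal_mul, div_mul_div_cancel₀ hA.ne',
        div_self (norm_ne_zero_iff.2 hci), RCLike.ofReal_one, one_smul]
  obtain ⟨σ, hσ⟩ := exists_norm_sum_sub_sq_le (𝕜 := 𝕜) hp₀ hp₁ hw n
  rw [hpw] at hσ
  refine ⟨univ.image σ, card_image_le.trans (by simp), (n : 𝕜)⁻¹ • ∑ k, w (σ k),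
    smul_mem _ _ (sum_mem fun k _ =>
      smul_mem _ _ (smul_mem _ _ (subset_span ⟨σ k, by simp, rfl⟩))), ?_⟩
  have hn' : (n : 𝕜) ≠ 0 := Nat.cast_ne_zero.2 hn.ne'
  have hsum : ∑ i, c i • u i - (n : 𝕜)⁻¹ • ∑ k, w (σ k) =
      (n : 𝕜)⁻¹ • ∑ k, (∑ i, c i • u i - w (σ k)) := by
    rw [sum_sub_distrib, sum_const, card_univ, Fintype.card_fin, smul_sub,
      ← Nat.cast_smul_eq_nsmul 𝕜, inv_smul_smul₀ hn']
  have hsqrt : ‖∑ k, (∑ i, c i • u i - w (σ k))‖ ≤ √n * A := by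
    calc _ ≤ √(n * A ^ 2) := Real.le_sqrt_of_sq_le hσ
      _ = √n * A := by rw [Real.sqrt_mul n.cast_nonneg, Real.sqrt_sq hA₀]
  rw [hsum, norm_smul, norm_inv, RCLike.norm_natCast]
  calc (n : ℝ)⁻¹ * ‖∑ k, (∑ i, c i • u i - w (σ k))‖ ≤ (n : ℝ)⁻¹ * (√n * A) := by gcongr
    _ = A / √n := by
        have : (0 : ℝ) < √n := Real.sqrt_pos.2 (by exact_mod_cast hn)
        field_simp
        rw [Real.sq_sqrt n.cast_nonneg]

end Maurey

section Dictionary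

variable {X : Type*} [TopologicalSpace X] {N : ℕ} (φ : Fin N → C(X, ℂ))

theorem mem_sparseSet_of_mem_span {k : ℕ} (hk : k ≤ N) {J : Finset (Fin N)} (hJ : #J ≤ k)
    {h : C(X, ℂ)} (hh : h ∈ span ℂ (φ '' J)) : h ∈ SparseSet φ k := by
  obtain ⟨K, hJK, -, hK⟩ := exists_subsuperset_card_eq (subset_univ J) hJ (by simpa using hk)
  exact ⟨K, hK, span_mono (Set.image_mono (by exact_mod_cast hJK)) hh⟩

theorem isEmpty_sparseSet_of_lt {k : ℕ} (hk : N < k) : IsEmpty (SparseSet φ k) :=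
  ⟨fun ⟨_, J, hJ, _⟩ => by
    have := card_le_univ J
    simp only [hJ, Fintype.card_fin] at this
    omega⟩

theorem zero_mem_A1r (r : ℝ) : 0 ∈ A1r φ r :=
  ⟨0, (sum_eq_zero fun j _ => zero_smul ℂ (φ j)).symm, by simp⟩

theorem sum_norm_tail_le_rpow_neg {r : ℝ} (hr : 0 ≤ r) {c : Fin N → ℂ}
    (hc : ∑ j : Fin N, ‖c j‖ * ((j : ℕ) + 1 : ℝ) ^ r ≤ 1) {v : ℕ} (hv : 0 < v) :
    ∑ j : Fin N, ‖if (j : ℕ) < v then 0 else c j‖ ≤ (v : ℝ) ^ (-r) := by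
  have hv' : (0 : ℝ) < v := Nat.cast_pos.2 hv
  have hterm : ∀ j : Fin N,
      (v : ℝ) ^ r * ‖if (j : ℕ) < v then 0 else c j‖ ≤ ‖c j‖ * ((j : ℕ) + 1 : ℝ) ^ r := by
    intro j
    split_ifs with hj
    · simp only [norm_zero, mul_zero]; positivity
    · rw [mul_comm]
      gcongr
      exact_mod_cast (not_lt.1 hj).trans (Nat.le_succ j)
  rw [Real.rpow_neg hv'.le, ← one_div, le_div_iff₀ (by positivity), mul_comm, mul_sum]
  exact (sum_le_sum fun j _ => hterm j).trans hc

theorem exists_mem_span_norm_sub_le_of_mem_A1r {E : Type*} [NormedAddCommGroup E]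
    [InnerProductSpace ℂ E] (T : C(X, ℂ) →ₗ[ℂ] E) (hT : ∀ j, ‖T (φ j)‖ ≤ 1) {r : ℝ}
    (hr : 0 ≤ r) {v : ℕ} (hv : 0 < v) {g : C(X, ℂ)} (hg : g ∈ A1r φ r) :
    ∃ J : Finset (Fin N), #J ≤ 2 * v ∧ ∃ h ∈ span ℂ (φ '' J),
      ‖T (g - h)‖ ≤ (v : ℝ) ^ (-r - 1 / 2) := by
  classical
  obtain ⟨c, rfl, hc⟩ := hg
  set t : Fin N → ℂ := fun j => if (j : ℕ) < v then 0 else c j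
  obtain ⟨J, hJ, _, hh, hdist⟩ :=
    exists_mem_span_norm_sum_smul_sub_le t (fun j => T (φ j)) hT hv
  rw [← Set.image_image, span_image] at hh
  obtain ⟨h₀, hh₀, rfl⟩ := hh
  set H : Finset (Fin N) := {j | (j : ℕ) < v}
  refine ⟨H ∪ J, ?_, ∑ j, (c j - t j) • φ j + h₀, add_mem (sum_mem fun j _ => ?_)
    (span_mono (Set.image_mono (by simp)) hh₀), ?_⟩
  · calc #(H ∪ J) ≤ #H + #J := card_union_le H J
      _ ≤ v + v := add_le_add (Fin.card_filter_val_lt.trans_le (min_le_right N v)) hJ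
      _ = 2 * v := (two_mul v).symm
  · by_cases hj : (j : ℕ) < v
    · exact smul_mem _ _ (subset_span ⟨j, by simp [H, hj], rfl⟩)
    · have htj : c j - t j = 0 := by simp [t, hj]
      exact htj ▸ (zero_smul ℂ (φ j)).symm ▸ zero_mem _
  · have hsplit : T (∑ j, c j • φ j - (∑ j, (c j - t j) • φ j + h₀)) =
        ∑ j, t j • T (φ j) - T h₀ := by
      simp only [map_sub, map_add, map_sum, map_smul, sub_smul, sum_sub_distrib]
      abel
    have hv' : (0 : ℝ) < v := Nat.cast_pos.2 hv
    rw [hsplit, Real.rpow_sub hv', Real.rpow_neg hv'.le, ← Real.rpow_neg hv'.le,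
      ← Real.sqrt_eq_rpow]
    exact hdist.trans (by gcongr; exact sum_norm_tail_le_rpow_neg hr hc hv)

end Dictionary

section DiscreteL2

variable {Ω : Type*} [MeasurableSpace Ω]

theorem discMeasure_univ_le (μ : Measure Ω) [IsProbabilityMeasure μ] {m : ℕ} (ξ : Fin m → Ω) :
    discMeasure μ ξ Set.univ ≤ 1 := by
  rcases Nat.eq_zero_or_pos m with rfl | hm
  · simp [discMeasure]
  · have hm' : (m : ENNReal) ≠ 0 := Nat.cast_ne_zero.2 hm.ne'
    simp only [discMeasure, Measure.add_apply, Measure.smul_apply, Measure.coe_finsetSum,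
      Finset.sum_apply, measure_univ, sum_const, card_univ, Fintype.card_fin, nsmul_eq_mul,
      mul_one, smul_eq_mul]
    rw [ENNReal.mul_inv (by simp) (by simp), mul_assoc,
      ENNReal.inv_mul_cancel hm' (ENNReal.natCast_ne_top m), mul_one, one_div,
      ENNReal.inv_two_add_inv_two]

theorem l2n_nonneg (μ : Measure Ω) (f : Ω → ℂ) : 0 ≤ l2n μ f :=
  Real.rpow_nonneg (integral_nonneg fun _ => by positivity) _

variable [TopologicalSpace Ω] [CompactSpace Ω] [BorelSpace Ω] (ν : Measure Ω) [IsFiniteMeasure ν]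

theorem norm_toLp_eq_l2n (u : C(Ω, ℂ)) :
    ‖ContinuousMap.toLp (E := ℂ) 2 ν ℂ u‖ = l2n ν u := by
  have hae := ContinuousMap.coeFn_toLp (E := ℂ) (𝕜 := ℂ) (p := 2) ν u
  have hmem : MemLp u 2 ν := (memLp_congr_ae hae).1 (Lp.memLp _)
  rw [Lp.norm_def, eLpNorm_congr_ae hae,
    hmem.eLpNorm_eq_integral_rpow_norm two_ne_zero ENNReal.ofNat_ne_top,
    ENNReal.toReal_ofReal (Real.rpow_nonneg (integral_nonneg fun _ => by positivity) _)]
  simp [l2n]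

theorem norm_toLp_le (hν : ν Set.univ ≤ 1) (u : C(Ω, ℂ)) :
    ‖ContinuousMap.toLp (E := ℂ) 2 ν ℂ u‖ ≤ ‖u‖ := by
  refine (ContinuousLinearMap.le_opNorm _ _).trans (mul_le_of_le_one_left (norm_nonneg u) ?_)
  refine (ContinuousMap.toLp_norm_le ν).trans
    (Real.rpow_le_one (by positivity) ?_ (by positivity))
  have : measureUnivNNReal ν ≤ 1 := by
    rw [← ENNReal.coe_le_coe, coe_measureUnivNNReal]
    simpa using hν
  exact_mod_cast this

end DiscreteL2

theorem stmt6_general {d : ℕ} (Ω : Set (Fin d → ℝ)) [CompactSpace Ω]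
    (μ : Measure Ω) [IsProbabilityMeasure μ]
    (N : ℕ) (φ : Fin N → C(Ω, ℂ))
    (hφ : ∀ (j : Fin N) (x : Ω), ‖φ j x‖ ≤ 1)
    (r : ℝ) (hr : 0 ≤ r) (F : Set C(Ω, ℂ))
    (m : ℕ) (ξ : Fin m → Ω) (v : ℕ) (hv : 1 ≤ v) :
    ∀ f ∈ F,
      (⨅ h : SparseSet φ (2 * v), l2n (discMeasure μ ξ) ⇑(f - (h : C(Ω, ℂ)))) ≤
        (v : ℝ) ^ (-r - 1 / 2 : ℝ) +
          ⨅ gA : A1r φ r, ‖f - (gA : C(Ω, ℂ))‖ := by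
  intro f _
  set ν := discMeasure μ ξ
  have hν : ν Set.univ ≤ 1 := discMeasure_univ_le μ ξ
  have : IsFiniteMeasure ν := ⟨hν.trans_lt ENNReal.one_lt_top⟩
  set T : C(Ω, ℂ) →L[ℂ] Lp ℂ 2 ν := ContinuousMap.toLp (E := ℂ) 2 ν ℂ
  have hTφ : ∀ j, ‖T (φ j)‖ ≤ 1 := fun j =>
    (norm_toLp_le ν hν _).trans ((ContinuousMap.norm_le _ zero_le_one).2 (hφ j))
  have : Nonempty (A1r φ r) := ⟨⟨0, zero_mem_A1r φ r⟩⟩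
  rw [← sub_le_iff_le_add']
  refine le_ciInf fun ⟨g, hg⟩ => sub_le_iff_le_add'.2 ?_
  by_cases hN : 2 * v ≤ N
  · have hbdd :
        BddBelow (Set.range fun h : SparseSet φ (2 * v) => l2n ν ⇑(f - (h : C(Ω, ℂ)))) :=
      ⟨0, by rintro _ ⟨h, rfl⟩; exact l2n_nonneg ν _⟩
    obtain ⟨J, hJ, h, hh, hgh⟩ :=
      exists_mem_span_norm_sub_le_of_mem_A1r φ T.toLinearMap hTφ hr hv hg
    calc (⨅ h : SparseSet φ (2 * v), l2n ν ⇑(f - (h : C(Ω, ℂ))))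
        ≤ l2n ν ⇑(f - h) :=
          ciInf_le hbdd ⟨h, mem_sparseSet_of_mem_span φ hN hJ hh⟩
      _ = ‖T (f - g) + T (g - h)‖ := by
          rw [← norm_toLp_eq_l2n, ← map_add, sub_add_sub_cancel]
      _ ≤ ‖f - g‖ + (v : ℝ) ^ (-r - 1 / 2) :=
          (norm_add_le _ _).trans (add_le_add (norm_toLp_le ν hν _) hgh)
      _ = _ := add_comm _ _
  · have := isEmpty_sparseSet_of_lt φ (not_le.1 hN)
    rw [Real.iInf_of_isEmpty]
    positivity

/-- for any points `ξ ∈ Ω^m`, any `f` in the class `F` satisfies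
`σ_{2v}(f,Φ_N)_{L₂(Ω,μ_ξ)} ≤ v^{-r-1/2} + dist(f, A₁^r(Φ_N))_∞`, which gives
`sup_{f∈F} σ_{2v}(f,Φ_N)_{L₂(Ω,μ_ξ)} ≤ v^{-r-1/2} + dist(F, A₁^r(Φ_N))_∞`. -/
theorem stmt6 {d : ℕ} (Ω : Set (Fin d → ℝ)) [CompactSpace Ω] (hΩ : IsCompact Ω)
    (μ : Measure Ω) [IsProbabilityMeasure μ]
    (N : ℕ) (φ : Fin N → C(Ω, ℂ))
    (hφ : ∀ (j : Fin N) (x : Ω), ‖φ j x‖ ≤ 1)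
    (r : ℝ) (hr : 0 ≤ r) (F : Set C(Ω, ℂ))
    (m : ℕ) (ξ : Fin m → Ω) (v : ℕ) (hv : 1 ≤ v) :
    ∀ f ∈ F,
      (⨅ h : SparseSet φ (2 * v), l2n (discMeasure μ ξ) ⇑(f - (h : C(Ω, ℂ)))) ≤
        (v : ℝ) ^ (-r - 1 / 2 : ℝ) +
          ⨅ gA : A1r φ r, ‖f - (gA : C(Ω, ℂ))‖ :=
  stmt6_general Ω μ N φ hφ r hr F m ξ v hv
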